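/- Let V be a finite set, and for each v ∈ V let h_v : 𝒳 → [0,1] be monotone and DR-submodular. Let R₁, …, R_θ be subsets of V with θ ≥ 1 and let n > 0 be a real number. Then the function ĝ(x) = (n/θ)·Σ_{i=1}^{θ} (1 − ∏_{v∈R_i}(1 − h_v(x))) is nonnegative, monotone, and DR-submodular on 𝒳. -/

import Mathlib

/-!
Each summand of `ĝ` is a coverage `1 - ∏ v ∈ Rᵢ, (1 - h v x)`. The factors `1 - h v` are
nonnegative, antitone, and their increments grow along the order; the splitting
`b j * ∏ b - b' j * ∏ b' = b j * (∏ b - ∏ b') + (∏ b') * (b j - b' j)` shows by induction on the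
number of factors that the product inherits this growth of increments. Nonnegative combinations
then preserve nonnegativity, monotonicity and DR-submodularity.
-/

/-- `x` lies in the lattice `𝒳`: each coordinate is a nonnegative integer multiple of `δ`. -/
def InLattice {d : ℕ} (δ : ℝ) (x : Fin d → ℝ) : Prop := ∀ i, ∃ n : ℕ, x i = n * δ

/-- The `i`-th standard unit vector of `ℝ^d`. -/
def eVec {d : ℕ} (i : Fin d) : Fin d → ℝ := Pi.single i 1

theorem InLattice.add_smul_eVec {d : ℕ} {δ : ℝ} {x : Fin d → ℝ} (hx : InLattice δ x)
    (i : Fin d) : InLattice δ (x + δ • eVec i) := by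
  intro j
  obtain ⟨m, hm⟩ := hx j
  rcases eq_or_ne j i with rfl | hj
  · exact ⟨m + 1, by simp [eVec, hm]; ring⟩
  · exact ⟨m, by simp [eVec, hj, hm]⟩

theorem le_add_smul_eVec {d : ℕ} {δ : ℝ} (hδ : 0 ≤ δ) (x : Fin d → ℝ) (i : Fin d) :
    x ≤ x + δ • eVec i :=
  le_add_of_nonneg_right (smul_nonneg hδ (Pi.single_nonneg.2 zero_le_one))

theorem Finset.prod_sub_prod_le_prod_sub_prod {ι R : Type*} [CommRing R] [PartialOrder R]
    [IsOrderedRing R] (s : Finset ι) {a a' b b' : ι → R}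
    (hb' : ∀ i ∈ s, 0 ≤ b' i) (hb'b : ∀ i ∈ s, b' i ≤ b i) (hba : ∀ i ∈ s, b i ≤ a i)
    (hb'a' : ∀ i ∈ s, b' i ≤ a' i) (hdiff : ∀ i ∈ s, b i - b' i ≤ a i - a' i) :
    ∏ i ∈ s, b i - ∏ i ∈ s, b' i ≤ ∏ i ∈ s, a i - ∏ i ∈ s, a' i := by
  induction s using Finset.cons_induction with
  | empty => simp
  | cons j s hj ih =>
    simp only [Finset.forall_mem_cons] at hb' hb'b hba hb'a' hdiff
    have hB' : 0 ≤ ∏ i ∈ s, b' i := Finset.prod_nonneg hb'.2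
    have hB'A' : ∏ i ∈ s, b' i ≤ ∏ i ∈ s, a' i := Finset.prod_le_prod hb'.2 hb'a'.2
    have hB'B : ∏ i ∈ s, b' i ≤ ∏ i ∈ s, b i := Finset.prod_le_prod hb'.2 hb'b.2
    have hb : 0 ≤ b j := hb'.1.trans hb'b.1
    have hfirst : b j * (∏ i ∈ s, b i - ∏ i ∈ s, b' i) ≤ a j * (∏ i ∈ s, a i - ∏ i ∈ s, a' i) :=
      mul_le_mul hba.1 (ih hb'.2 hb'b.2 hba.2 hb'a'.2 hdiff.2) (sub_nonneg.2 hB'B)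
        (hb.trans hba.1)
    have hsecond : (∏ i ∈ s, b' i) * (b j - b' j) ≤ (∏ i ∈ s, a' i) * (a j - a' j) :=
      mul_le_mul hB'A' hdiff.1 (sub_nonneg.2 hb'b.1) (hB'.trans hB'A')
    simp only [Finset.prod_cons]
    linear_combination hfirst + hsecond

/-- The probability that some `v ∈ s` is reached when `v` is reached independently with
probability `p v`. -/
def coverage {V : Type*} (s : Finset V) (p : V → ℝ) : ℝ := 1 - ∏ v ∈ s, (1 - p v)

section coverage

variable {V : Type*} (s : Finset V) {p p' q q' : V → ℝ}

theorem coverage_nonneg (hp : ∀ v ∈ s, p v ∈ Set.Icc 0 1) : 0 ≤ coverage s p := by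
  refine sub_nonneg.2 (Finset.prod_le_one (fun v hv => ?_) fun v hv => ?_)
  · linarith [(hp v hv).2]
  · linarith [(hp v hv).1]

theorem coverage_le_coverage (hq : ∀ v ∈ s, q v ≤ 1) (hpq : ∀ v ∈ s, p v ≤ q v) :
    coverage s p ≤ coverage s q := by
  refine sub_le_sub_left (Finset.prod_le_prod (fun v hv => ?_) fun v hv => ?_) 1
  · linarith [hq v hv]
  · linarith [hpq v hv]

theorem coverage_sub_coverage_le (hq' : ∀ v ∈ s, q' v ≤ 1) (hqq' : ∀ v ∈ s, q v ≤ q' v)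
    (hpq : ∀ v ∈ s, p v ≤ q v) (hp'q' : ∀ v ∈ s, p' v ≤ q' v)
    (hdiff : ∀ v ∈ s, q' v - q v ≤ p' v - p v) :
    coverage s q' - coverage s q ≤ coverage s p' - coverage s p := by
  have := Finset.prod_sub_prod_le_prod_sub_prod s (a := fun v => 1 - p v)
    (a' := fun v => 1 - p' v) (b := fun v => 1 - q v) (b' := fun v => 1 - q' v)
    (fun v hv => sub_nonneg.2 (hq' v hv)) (fun v hv => by linarith [hqq' v hv])
    (fun v hv => by linarith [hpq v hv]) (fun v hv => by linarith [hp'q' v hv])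
    (fun v hv => by linarith [hdiff v hv])
  unfold coverage
  linarith

end coverage

theorem gHat_nonneg_monotone_DRsubmodular_general {d : ℕ} (δ : ℝ) (hδ : 0 < δ)
    {V : Type*} [Fintype V] (h : V → (Fin d → ℝ) → ℝ)
    (hrange : ∀ v, ∀ x, InLattice δ x → h v x ∈ Set.Icc (0 : ℝ) 1)
    (hmono : ∀ v, ∀ x y, InLattice δ x → InLattice δ y → x ≤ y → h v x ≤ h v y)
    (hsub : ∀ v, ∀ x y, InLattice δ x → InLattice δ y → x ≤ y → ∀ i : Fin d,
      h v (y + δ • eVec i) - h v y ≤ h v (x + δ • eVec i) - h v x)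
    (θ : ℕ) (R : Fin θ → Finset V) (n : ℝ) (hn : 0 < n)
    (gHat : (Fin d → ℝ) → ℝ)
    (hgHat : ∀ x, gHat x = (n / θ) * ∑ i : Fin θ, (1 - ∏ v ∈ R i, (1 - h v x))) :
    (∀ x, InLattice δ x → 0 ≤ gHat x) ∧
    (∀ x y, InLattice δ x → InLattice δ y → x ≤ y → gHat x ≤ gHat y) ∧
    (∀ x y, InLattice δ x → InLattice δ y → x ≤ y → ∀ i : Fin d,
      gHat (y + δ • eVec i) - gHat y ≤ gHat (x + δ • eVec i) - gHat x) := by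
  have hg : ∀ x, gHat x = n / θ * ∑ k, coverage (R k) (h · x) := hgHat
  have hc : 0 ≤ n / θ := div_nonneg hn.le θ.cast_nonneg
  refine ⟨fun x hx => ?_, fun x y hx hy hxy => ?_, fun x y hx hy hxy i => ?_⟩
  · rw [hg]
    exact mul_nonneg hc (Finset.sum_nonneg fun k _ => coverage_nonneg _ fun v _ => hrange v x hx)
  · rw [hg, hg]
    gcongr with k
    exact coverage_le_coverage _ (fun v _ => (hrange v y hy).2)
      fun v _ => hmono v x y hx hy hxy
  · have hx' := hx.add_smul_eVec i
    have hy' := hy.add_smul_eVec i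
    simp only [hg, ← mul_sub, ← Finset.sum_sub_distrib]
    refine mul_le_mul_of_nonneg_left (Finset.sum_le_sum fun k _ => ?_) hc
    exact coverage_sub_coverage_le _ (fun v _ => (hrange v _ hy').2)
      (fun v _ => hmono v _ _ hy hy' (le_add_smul_eVec hδ.le y i))
      (fun v _ => hmono v x y hx hy hxy)
      (fun v _ => hmono v _ _ hx' hy' (add_le_add_left hxy _))
      (fun v _ => hsub v x y hx hy hxy i)

/-- Let `V` be a finite set and for each `v ∈ V` let `h v : 𝒳 → [0,1]` be monotone and
DR-submodular. Let `R₁, …, R_θ ⊆ V` with `θ ≥ 1` and `n > 0`. Then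
`ĝ(x) = (n/θ)·Σᵢ (1 − ∏_{v∈Rᵢ}(1 − h v x))` is nonnegative, monotone, and DR-submodular. -/
theorem gHat_nonneg_monotone_DRsubmodular {d : ℕ} (hd : 1 ≤ d) (δ : ℝ) (hδ : 0 < δ)
    {V : Type*} [Fintype V] (h : V → (Fin d → ℝ) → ℝ)
    (hrange : ∀ v, ∀ x, InLattice δ x → h v x ∈ Set.Icc (0 : ℝ) 1)
    (hmono : ∀ v, ∀ x y, InLattice δ x → InLattice δ y → x ≤ y → h v x ≤ h v y)
    (hsub : ∀ v, ∀ x y, InLattice δ x → InLattice δ y → x ≤ y → ∀ i : Fin d,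
      h v (y + δ • eVec i) - h v y ≤ h v (x + δ • eVec i) - h v x)
    (θ : ℕ) (hθ : 1 ≤ θ) (R : Fin θ → Finset V) (n : ℝ) (hn : 0 < n)
    (gHat : (Fin d → ℝ) → ℝ)
    (hgHat : ∀ x, gHat x = (n / θ) * ∑ i : Fin θ, (1 - ∏ v ∈ R i, (1 - h v x))) :
    (∀ x, InLattice δ x → 0 ≤ gHat x) ∧
    (∀ x y, InLattice δ x → InLattice δ y → x ≤ y → gHat x ≤ gHat y) ∧
    (∀ x y, InLattice δ x → InLattice δ y → x ≤ y → ∀ i : Fin d,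
      gHat (y + δ • eVec i) - gHat y ≤ gHat (x + δ • eVec i) - gHat x) :=
  gHat_nonneg_monotone_DRsubmodular_general δ hδ h hrange hmono hsub θ R n hn gHat hgHat
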